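/- The projected velocities belong to the Raviart–Thomas space: for every m ∈ {0,…,N}, u^m_h ∈ RT₀; equivalently, (u^m_{L_σ} − u^m_{K_σ})·n_{K_σ,σ} = 0 for every interior edge σ and u^m_{K_σ}·n_{K_σ,σ} = 0 for every boundary edge σ, and consequently div_h u^m_h = 0. -/

import Mathlib

open scoped RealInnerProductSpace
open MeasureTheory

attribute [local instance] Classical.propDecidable

noncomputable section

/-- The Euclidean plane. -/
abbrev E2 : Type := EuclideanSpace ℝ (Fin 2)

/-- A nondegenerate (closed) triangle of the plane, given by its three
affinely independent vertices. -/
structure Tri : Type where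
  vtx : Fin 3 → E2
  indep : AffineIndependent ℝ vtx

namespace Tri

/-- The triangle as a subset of the plane: the convex hull of its vertices. -/
def carrier (t : Tri) : Set E2 := convexHull ℝ (Set.range t.vtx)

/-- The area `|K|` of the triangle. -/
def area (t : Tri) : ℝ := (volume t.carrier).toReal

/-- The centroid of the triangle. -/
def centroid (t : Tri) : E2 := Finset.centroid ℝ Finset.univ t.vtx

/-- The triangle seen as a 2-simplex. -/
def simplex (t : Tri) : Affine.Simplex ℝ E2 2 := ⟨t.vtx, t.indep⟩

/-- The circumcenter `x_K` of the triangle. -/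
def ccenter (t : Tri) : E2 := t.simplex.circumcenter

/-- `σ` (an ordered pair of distinct points) is an edge of the triangle `t`:
both of its endpoints are vertices of `t`. -/
def hasEdge (t : Tri) (σ : E2 × E2) : Prop :=
  σ.1 ≠ σ.2 ∧ σ.1 ∈ Set.range t.vtx ∧ σ.2 ∈ Set.range t.vtx

end Tri

/-- The segment of an edge. -/
def eseg (σ : E2 × E2) : Set E2 := segment ℝ σ.1 σ.2

/-- The length `|σ|` of an edge. -/
def elen (σ : E2 × E2) : ℝ := dist σ.1 σ.2

/-- The midpoint `x_σ` of an edge. -/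
def emid (σ : E2 × E2) : E2 := midpoint ℝ σ.1 σ.2

/-- Rotation by `π/2` in the plane. -/
def perp (x : E2) : E2 := (EuclideanSpace.equiv (Fin 2) ℝ).symm ![-(x 1), x 0]

/-- The unit normal `n_{K,σ}` to the edge `σ`, pointing outward of the triangle `t`. -/
def Tri.nrm (t : Tri) (σ : E2 × E2) : E2 :=
  if 0 ≤ ⟪perp (σ.2 - σ.1), emid σ - t.centroid⟫
  then (elen σ)⁻¹ • perp (σ.2 - σ.1)
  else -((elen σ)⁻¹ • perp (σ.2 - σ.1))

/-- An admissible triangulation `𝒯_h` of `Ω`, together with a registration of its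
edges (each geometric edge is recorded once, with a chosen orientation) and a labelling
`K_σ`, `L_σ` of the triangle(s) adjacent to each edge.  All interior angles of all
triangles are `< π/2`. -/
structure Mesh (Ω : Set E2) : Type where
  tris : Finset Tri
  tris_nonempty : tris.Nonempty
  edges : Finset (E2 × E2)
  Kof : E2 × E2 → Tri
  Lof : E2 × E2 → Tri
  interior_disjoint : ∀ t₁ ∈ tris, ∀ t₂ ∈ tris, t₁ ≠ t₂ →
    interior t₁.carrier ∩ interior t₂.carrier = ∅
  union_eq : ⋃ t ∈ (tris : Set Tri), t.carrier = closure Ω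
  inter_structure : ∀ t₁ ∈ tris, ∀ t₂ ∈ tris, t₁ ≠ t₂ →
    t₁.carrier ∩ t₂.carrier = ∅
    ∨ (∃ a ∈ Set.range t₁.vtx ∩ Set.range t₂.vtx, t₁.carrier ∩ t₂.carrier = {a})
    ∨ (∃ σ, t₁.hasEdge σ ∧ t₂.hasEdge σ ∧ t₁.carrier ∩ t₂.carrier = eseg σ)
  angles_lt : ∀ t ∈ tris, ∀ i j l : Fin 3, i ≠ j → i ≠ l → j ≠ l →
    EuclideanGeometry.angle (t.vtx j) (t.vtx i) (t.vtx l) < Real.pi / 2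
  edges_ne : ∀ σ ∈ edges, σ.1 ≠ σ.2
  edges_cover : ∀ t ∈ tris, ∀ i j : Fin 3, i ≠ j →
    (t.vtx i, t.vtx j) ∈ edges ∨ (t.vtx j, t.vtx i) ∈ edges
  edges_sub : ∀ σ ∈ edges, ∃ t ∈ tris, t.hasEdge σ
  edges_orient : ∀ σ ∈ edges, Prod.swap σ ∉ edges
  edges_atMostTwo : ∀ σ ∈ edges, (tris.filter fun t => t.hasEdge σ).card ≤ 2
  Kof_mem : ∀ σ ∈ edges, Kof σ ∈ tris ∧ (Kof σ).hasEdge σ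
  Lof_mem : ∀ σ ∈ edges, (tris.filter fun t => t.hasEdge σ).card = 2 →
    Lof σ ∈ tris ∧ (Lof σ).hasEdge σ ∧ Lof σ ≠ Kof σ
  ext_frontier : ∀ σ ∈ edges, (tris.filter fun t => t.hasEdge σ).card = 1 →
    eseg σ ⊆ frontier Ω

namespace Mesh

variable {Ω : Set E2} (M : Mesh Ω)

/-- The interior edges `ℰ_h^int` (shared by exactly two triangles). -/
def intEdges : Finset (E2 × E2) :=
  M.edges.filter fun σ => (M.tris.filter fun t => t.hasEdge σ).card = 2

/-- The boundary edges `ℰ_h^ext`. -/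
def extEdges : Finset (E2 × E2) :=
  M.edges.filter fun σ => (M.tris.filter fun t => t.hasEdge σ).card = 1

/-- `d_σ`: distance between the circumcenters of the two triangles sharing `σ`
(interior edges), or from the circumcenter of `K_σ` to the midpoint of `σ`
(boundary edges). -/
def dOf (σ : E2 × E2) : ℝ :=
  if (M.tris.filter fun t => t.hasEdge σ).card = 2
  then dist (M.Kof σ).ccenter (M.Lof σ).ccenter
  else dist (M.Kof σ).ccenter (emid σ)

/-- `τ_σ = |σ| / d_σ`. -/
def tau (σ : E2 × E2) : ℝ := elen σ / M.dOf σ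

/-- The mesh size `h`: the largest diameter of a circumscribed circle. -/
def meshSize : ℝ := M.tris.sup' M.tris_nonempty fun t => 2 * t.simplex.circumradius

/-- Mesh regularity with constant `C_reg`: `d_σ ≥ C_reg |σ|` and `|σ| ≥ C_reg h`. -/
def Regular (Creg : ℝ) : Prop :=
  ∀ σ ∈ M.edges, Creg * elen σ ≤ M.dOf σ ∧ Creg * M.meshSize ≤ elen σ

/-- For `σ` an edge of `t`, the triangle on the other side of `σ`. -/
def other (t : Tri) (σ : E2 × E2) : Tri := if M.Kof σ = t then M.Lof σ else M.Kof σ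

/-- The `L²(Ω)` inner product of two piecewise constant (`P₀`) fields. -/
def l2P0 (v w : Tri → E2) : ℝ := ∑ t ∈ M.tris, t.area * ⟪v t, w t⟫

/-- The `L²(Ω)` norm of a `P₀` field. -/
def l2normP0 (v : Tri → E2) : ℝ := Real.sqrt (M.l2P0 v v)

/-- The discrete `H¹` norm `‖·‖_h` on `P₀`. -/
def normh (v : Tri → E2) : ℝ :=
  Real.sqrt (∑ σ ∈ M.intEdges, M.tau σ * ‖v (M.Lof σ) - v (M.Kof σ)‖ ^ 2
    + ∑ σ ∈ M.extEdges, M.tau σ * ‖v (M.Kof σ)‖ ^ 2)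

/-- A family of affine maps (one per triangle) is in `P₁^{nc}`: the two traces agree
at the midpoint of every interior edge. -/
def IsP1nc (q : Tri → (E2 →ᵃ[ℝ] ℝ)) : Prop :=
  ∀ σ ∈ M.intEdges, q (M.Kof σ) (emid σ) = q (M.Lof σ) (emid σ)

/-- Membership in `L²₀`: the piecewise affine function has zero mean on `Ω`. -/
def MeanZero (q : Tri → (E2 →ᵃ[ℝ] ℝ)) : Prop :=
  ∑ t ∈ M.tris, ∫ x in t.carrier, q t x = 0

/-- The `L²(Ω)` inner product of two piecewise affine functions. -/
def l2P1 (q r : Tri → (E2 →ᵃ[ℝ] ℝ)) : ℝ :=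
  ∑ t ∈ M.tris, ∫ x in t.carrier, q t x * r t x

/-- The `L²(Ω)` norm of a piecewise affine function. -/
def l2normP1 (q : Tri → (E2 →ᵃ[ℝ] ℝ)) : ℝ := Real.sqrt (M.l2P1 q q)

end Mesh

/-- The gradient (a constant vector) of an affine function on the plane. -/
def gradA (f : E2 →ᵃ[ℝ] ℝ) : E2 :=
  (InnerProductSpace.toDual ℝ E2).symm (LinearMap.toContinuousLinearMap f.linear)

/-- The discrete gradient `∇_h q` of a piecewise affine function: the piecewise
constant field equal on each triangle to the gradient of the affine piece. -/
def gradh (q : Tri → (E2 →ᵃ[ℝ] ℝ)) : Tri → E2 := fun t => gradA (q t)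

/-- The (constant) divergence of an affine vector field of the plane. -/
def divA (f : E2 →ᵃ[ℝ] E2) : ℝ := LinearMap.trace ℝ E2 f.linear

/-- The normal component `(u·n_{K,σ})_σ` of a piecewise affine field on the edge `σ`
of the triangle `t` (evaluated at the midpoint of `σ`). -/
def unrm (u : Tri → (E2 →ᵃ[ℝ] E2)) (t : Tri) (σ : E2 × E2) : ℝ :=
  ⟪u t (emid σ), t.nrm σ⟫

namespace Mesh

variable {Ω : Set E2} (M : Mesh Ω)

/-- The norm `‖q‖_{1,h} = (|q|² + |∇_h q|²)^{1/2}` on `P₁^{nc}`. -/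
def norm1h (q : Tri → (E2 →ᵃ[ℝ] ℝ)) : ℝ :=
  Real.sqrt ((M.l2normP1 q) ^ 2 + (M.l2normP0 (gradh q)) ^ 2)

/-- The prescribed value of `div_h v` at the midpoint of the edge `σ`. -/
def divhImage (v : Tri → E2) (σ : E2 × E2) : ℝ :=
  if (M.tris.filter fun t => t.hasEdge σ).card = 2 then
    (3 * elen σ / ((M.Kof σ).area + (M.Lof σ).area)) *
      ⟪v (M.Lof σ) - v (M.Kof σ), (M.Kof σ).nrm σ⟫
  else
    -((3 * elen σ / (M.Kof σ).area) * ⟪v (M.Kof σ), (M.Kof σ).nrm σ⟫)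

/-- `d = div_h v`: `d` is the element of `P₁^{nc}` taking the prescribed values at
the midpoints of the edges. -/
def IsDivh (v : Tri → E2) (d : Tri → (E2 →ᵃ[ℝ] ℝ)) : Prop :=
  M.IsP1nc d ∧
    ∀ t ∈ M.tris, ∀ σ ∈ M.edges, t.hasEdge σ → d t (emid σ) = M.divhImage v σ

/-- The discrete Laplacian `Δ̃_h` on `P₀`. -/
def laph (v : Tri → E2) : Tri → E2 := fun t =>
  (t.area)⁻¹ •
    ((∑ σ ∈ M.intEdges.filter fun σ => t.hasEdge σ, M.tau σ • (v (M.other t σ) - v t))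
      - ∑ σ ∈ M.extEdges.filter fun σ => t.hasEdge σ, M.tau σ • v t)

/-- The upwind convection operator `b̃_h(u_h, v_h) ∈ P₀`. -/
def btilde (u : Tri → (E2 →ᵃ[ℝ] E2)) (v : Tri → E2) : Tri → E2 := fun t =>
  (t.area)⁻¹ • ∑ σ ∈ M.intEdges.filter fun σ => t.hasEdge σ,
    elen σ • (max (unrm u t σ) 0 • v t + min (unrm u t σ) 0 • v (M.other t σ))

/-- The trilinear form `b_h(u_h, v_h, w_h)`. -/
def bh (u : Tri → (E2 →ᵃ[ℝ] E2)) (v w : Tri → E2) : ℝ :=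
  ∑ t ∈ M.tris, t.area * ⟪w t, M.btilde u v t⟫

/-- Membership in the lowest-order Raviart–Thomas space `RT₀`: the normal component is
constant on each edge of each triangle, matches across interior edges and vanishes on
boundary edges. -/
def IsRT0 (u : Tri → (E2 →ᵃ[ℝ] E2)) : Prop :=
  (∀ t ∈ M.tris, ∀ σ ∈ M.edges, t.hasEdge σ → ∀ x ∈ eseg σ,
      ⟪u t x, t.nrm σ⟫ = unrm u t σ)
  ∧ (∀ σ ∈ M.intEdges,
      ⟪u (M.Kof σ) (emid σ), (M.Kof σ).nrm σ⟫ =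
        ⟪u (M.Lof σ) (emid σ), (M.Kof σ).nrm σ⟫)
  ∧ (∀ σ ∈ M.extEdges, unrm u (M.Kof σ) σ = 0)

/-- Membership of a piecewise constant field in `P₀ ∩ RT₀`. -/
def IsRT0const (v : Tri → E2) : Prop :=
  (∀ σ ∈ M.intEdges, ⟪v (M.Lof σ) - v (M.Kof σ), (M.Kof σ).nrm σ⟫ = 0)
  ∧ ∀ σ ∈ M.extEdges, ⟪v (M.Kof σ), (M.Kof σ).nrm σ⟫ = 0

/-- The `L²(Ω)` norm of a piecewise affine vector field. -/
def l2normRT (u : Tri → (E2 →ᵃ[ℝ] E2)) : ℝ :=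
  Real.sqrt (∑ t ∈ M.tris, ∫ x in t.carrier, ‖u t x‖ ^ 2)

end Mesh
/-! The correction step is built so that `div_h` annihilates `u^{n+1}_h`: `div_h` is linear, so
`div_h u^{n+1}_h = div_h ũ^{n+1}_h - (2k/3) div_h ∇_h(p^{n+1}_h - pⁿ_h) = 0` by the projection
equation. For a `P₀` field the midpoint values of `div_h` are the jumps of the normal component
(resp. the boundary normal component) times the positive factor `3|σ|/(|K_σ|+|L_σ|)`
(resp. `3|σ|/|K_σ|`), so they all vanish exactly when the field lies in `RT₀`. -/

lemma Tri.area_pos (t : Tri) : 0 < t.area := by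
  have hconv : Convex ℝ t.carrier := convex_convexHull ℝ _
  have hint : (interior t.carrier).Nonempty := by
    rw [hconv.interior_nonempty_iff_affineSpan_eq_top, Tri.carrier, affineSpan_convexHull,
      t.indep.affineSpan_eq_top_iff_card_eq_finrank_add_one, Fintype.card_fin,
      finrank_euclideanSpace_fin]
  have hpos : 0 < volume t.carrier :=
    (isOpen_interior.measure_pos volume hint).trans_le (measure_mono interior_subset)
  have hfin : volume t.carrier < ⊤ :=
    ((Set.finite_range t.vtx).isCompact_convexHull ℝ).measure_lt_top
  exact ENNReal.toReal_pos hpos.ne' hfin.ne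

namespace Mesh

variable {Ω : Set E2} (M : Mesh Ω) {σ : E2 × E2}

lemma elen_pos (hσ : σ ∈ M.edges) : 0 < elen σ := dist_pos.mpr (M.edges_ne σ hσ)

lemma mem_intEdges_or_mem_extEdges (hσ : σ ∈ M.edges) : σ ∈ M.intEdges ∨ σ ∈ M.extEdges := by
  have hle := M.edges_atMostTwo σ hσ
  have hpos : 0 < (M.tris.filter fun t => t.hasEdge σ).card := by
    obtain ⟨t, ht, hte⟩ := M.edges_sub σ hσ
    exact Finset.card_pos.mpr ⟨t, Finset.mem_filter.mpr ⟨ht, hte⟩⟩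
  simp only [intEdges, extEdges, Finset.mem_filter, hσ, true_and]
  omega

lemma divhImage_eq_zero_iff_of_mem_intEdges (v : Tri → E2) (hσ : σ ∈ M.intEdges) :
    M.divhImage v σ = 0 ↔ ⟪v (M.Lof σ) - v (M.Kof σ), (M.Kof σ).nrm σ⟫ = 0 := by
  obtain ⟨hσe, h2⟩ := Finset.mem_filter.mp hσ
  have hc : 0 < 3 * elen σ / ((M.Kof σ).area + (M.Lof σ).area) := by
    have := M.elen_pos hσe
    have := (M.Kof σ).area_pos
    have := (M.Lof σ).area_pos
    positivity
  rw [divhImage, if_pos h2, mul_eq_zero, or_iff_right hc.ne']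

lemma divhImage_eq_zero_iff_of_mem_extEdges (v : Tri → E2) (hσ : σ ∈ M.extEdges) :
    M.divhImage v σ = 0 ↔ ⟪v (M.Kof σ), (M.Kof σ).nrm σ⟫ = 0 := by
  obtain ⟨hσe, h1⟩ := Finset.mem_filter.mp hσ
  have hc : 0 < 3 * elen σ / (M.Kof σ).area := by
    have := M.elen_pos hσe
    have := (M.Kof σ).area_pos
    positivity
  rw [divhImage, if_neg (by omega), neg_eq_zero, mul_eq_zero, or_iff_right hc.ne']

lemma isRT0const_iff_divhImage_eq_zero (v : Tri → E2) :
    M.IsRT0const v ↔ ∀ σ ∈ M.edges, M.divhImage v σ = 0 := by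
  constructor
  · rintro ⟨hint, hext⟩ σ hσ
    rcases M.mem_intEdges_or_mem_extEdges hσ with hσ | hσ
    · exact (M.divhImage_eq_zero_iff_of_mem_intEdges v hσ).2 (hint σ hσ)
    · exact (M.divhImage_eq_zero_iff_of_mem_extEdges v hσ).2 (hext σ hσ)
  · intro hv
    exact ⟨fun σ hσ => (M.divhImage_eq_zero_iff_of_mem_intEdges v hσ).1
        (hv σ (Finset.mem_filter.mp hσ).1),
      fun σ hσ => (M.divhImage_eq_zero_iff_of_mem_extEdges v hσ).1
        (hv σ (Finset.mem_filter.mp hσ).1)⟩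

lemma divhImage_congr {v w : Tri → E2} (hvw : ∀ t ∈ M.tris, v t = w t) (hσ : σ ∈ M.edges) :
    M.divhImage v σ = M.divhImage w σ := by
  have hK := hvw _ (M.Kof_mem σ hσ).1
  by_cases h2 : (M.tris.filter fun t => t.hasEdge σ).card = 2
  · rw [divhImage, divhImage, if_pos h2, if_pos h2, hK, hvw _ (M.Lof_mem σ hσ h2).1]
  · rw [divhImage, divhImage, if_neg h2, if_neg h2, hK]

lemma divhImage_sub_smul (v g : Tri → E2) (c : ℝ) (σ : E2 × E2) :
    M.divhImage (v - c • g) σ = M.divhImage v σ - c * M.divhImage g σ := by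
  unfold divhImage
  split_ifs
  · simp only [Pi.sub_apply, Pi.smul_apply, sub_sub_sub_comm, ← smul_sub, inner_sub_left,
      real_inner_smul_left]
    ring
  · simp only [Pi.sub_apply, Pi.smul_apply, inner_sub_left, real_inner_smul_left]
    ring

end Mesh

theorem projected_velocity_in_RT0_general
    {Ω : Set E2} (M : Mesh Ω) (N : ℕ) (k : ℝ) (hk : 0 < k)
    (u ut : ℕ → Tri → E2) (p : ℕ → Tri → (E2 →ᵃ[ℝ] ℝ))
    (hu0 : M.IsRT0const (u 0)) (hu1 : M.IsRT0const (u 1))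
    (proj : ∀ n, 1 ≤ n → n + 1 ≤ N → ∀ σ ∈ M.edges,
      M.divhImage (fun s => gradA (p (n+1) s - p n s)) σ =
        (3 / (2 * k)) * M.divhImage (ut (n+1)) σ)
    (corr : ∀ n, 1 ≤ n → n + 1 ≤ N → ∀ t ∈ M.tris,
      u (n+1) t = ut (n+1) t - (2 * k / 3) • gradA (p (n+1) t - p n t)) :
    ∀ m ≤ N, M.IsRT0const (u m) ∧ ∀ σ ∈ M.edges, M.divhImage (u m) σ = 0 := by
  suffices h : ∀ m ≤ N, M.IsRT0const (u m) from
    fun m hm => ⟨h m hm, (M.isRT0const_iff_divhImage_eq_zero _).1 (h m hm)⟩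
  rintro (_ | _ | n) hm
  · exact hu0
  · exact hu1
  rw [M.isRT0const_iff_divhImage_eq_zero]
  intro σ hσ
  set g : Tri → E2 := fun s => gradA (p (n + 2) s - p (n + 1) s)
  calc M.divhImage (u (n + 2)) σ
      = M.divhImage (ut (n + 2) - (2 * k / 3) • g) σ :=
        M.divhImage_congr (corr (n + 1) (by omega) hm) hσ
    _ = M.divhImage (ut (n + 2)) σ - 2 * k / 3 * (3 / (2 * k) * M.divhImage (ut (n + 2)) σ) := by
        rw [M.divhImage_sub_smul, proj (n + 1) (by omega) hm σ hσ]
    _ = 0 := by field_simp; ring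

/-- **The projected velocities belong to the Raviart–Thomas space**: for every
`m ∈ {0,…,N}`, `u^m_h ∈ RT₀`, i.e. `(u^m_{L_σ}−u^m_{K_σ})·n_{K_σ,σ} = 0` on interior
edges and `u^m_{K_σ}·n_{K_σ,σ} = 0` on boundary edges; consequently `div_h u^m_h = 0`. -/
theorem projected_velocity_in_RT0
    {Ω : Set E2} (hΩo : IsOpen Ω) (hΩc : IsConnected Ω) (hΩb : Bornology.IsBounded Ω)
    (M : Mesh Ω) (N : ℕ) (hN : 2 ≤ N) (k : ℝ) (hk : 0 < k)
    (u ut : ℕ → Tri → E2) (p : ℕ → Tri → (E2 →ᵃ[ℝ] ℝ))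
    (hu0 : M.IsRT0const (u 0)) (hu1 : M.IsRT0const (u 1))
    (hp : ∀ n, 1 ≤ n → n ≤ N → M.IsP1nc (p n) ∧ M.MeanZero (p n))
    (proj : ∀ n, 1 ≤ n → n + 1 ≤ N → ∀ σ ∈ M.edges,
      M.divhImage (fun s => gradA (p (n+1) s - p n s)) σ =
        (3 / (2 * k)) * M.divhImage (ut (n+1)) σ)
    (corr : ∀ n, 1 ≤ n → n + 1 ≤ N → ∀ t ∈ M.tris,
      u (n+1) t = ut (n+1) t - (2 * k / 3) • gradA (p (n+1) t - p n t)) :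
    ∀ m ≤ N, M.IsRT0const (u m) ∧ ∀ σ ∈ M.edges, M.divhImage (u m) σ = 0 :=
  projected_velocity_in_RT0_general M N k hk u ut p hu0 hu1 proj corr
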